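/- Define ν(θ) = −(c₀/(π·cos c₀))·J₀(θ·c₀/π)·J₁((π−θ)·c₀/π) for θ ∈ [0,π]. Then: (i) ν(θ) ≥ 0 for every θ ∈ [0,π]; (ii) ∫₀^π ν(θ) dθ = 1; and (iii) for every β ∈ (0,π), ∫₀^π ν(θ) · (2·F_∞(β)/F_∞(θ)) · (∫₀^π 1{θ < α+β < π}·F(α) dα) dθ = ν(β), the integrand in θ being defined for θ ∈ [0,π). (Proposition 4.2 of the paper: ν is the invariant probability density of the Markov chain of angles along the spine.) -/

import Mathlib

open MeasureTheory Real

noncomputable def J0 (x : ℝ) : ℝ :=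
  ∑' k : ℕ, (-1 : ℝ) ^ k * (x / 2) ^ (2 * k) / ((Nat.factorial k : ℝ)) ^ 2

noncomputable def J1 (x : ℝ) : ℝ :=
  ∑' k : ℕ, (-1 : ℝ) ^ k * (x / 2) ^ (2 * k + 1) /
    ((Nat.factorial k : ℝ) * (Nat.factorial (k + 1) : ℝ))

noncomputable def c0 : ℝ := sInf {x : ℝ | 0 < x ∧ J0 x = 0}

/-- `F_∞(θ) = J₀(θ c₀/π)`. -/
noncomputable def Finf (θ : ℝ) : ℝ := J0 (θ * c0 / Real.pi)

/-- The critical generating function `F(x_c; θ) = c₀ J₁(θ c₀/π)/(2πθ)`, with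
`F(0) = (c₀/(2π))²`. -/
noncomputable def F (θ : ℝ) : ℝ :=
  if θ = 0 then (c0 / (2 * Real.pi)) ^ 2
  else c0 * J1 (θ * c0 / Real.pi) / (2 * Real.pi * θ)

/-- The invariant density `ν(θ) = -(c₀/(π cos c₀)) J₀(θc₀/π) J₁((π−θ)c₀/π)`. -/
noncomputable def nu (θ : ℝ) : ℝ :=
  -(c0 / (Real.pi * Real.cos c0)) * J0 (θ * c0 / Real.pi) *
    J1 ((Real.pi - θ) * c0 / Real.pi)

/-!
Write `evenEgf a p t = ∑ₖ aₖ t^(2k+p)/(2k+p)!`. Termwise Beta integrals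
`∫₀ˣ tᵐ/m! · (x-t)ˡ/l! dt = x^(m+l+1)/(m+l+1)!` turn the convolution `∫₀ˣ f(t) g(x-t) dt` of two
such series into the series whose coefficients are the Cauchy product of the two coefficient
sequences. In these coordinates `J₀`, `J₁` and `jinc x = 2 J₁(x)/x` have the coefficients
`(-1)ᵏ C(2k,k)/4ᵏ`, `(-1)ᵏ C(2k+2,k+1)/4ᵏ⁺¹` and `(-1)ᵏ Catₖ/4ᵏ`, so the identities
`∫₀ˣ J₁ = 1 - J₀(x)`, `∫₀ˣ J₀(t) J₁(x-t) dt = J₀(x) - cos x` and `∫₀ˣ jinc(t) J₀(x-t) dt = 2 J₁(x)`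
reduce to `∑_{i+j=n} C(2i,i) C(2j,j) = 4ⁿ` and `2 ∑_{i+j=n} Catᵢ C(2j,j) = C(2n+2,n+1)`.

After rescaling by `c₀/π`, the second identity at `x = c₀`, where `J₀(c₀) = 0`, gives `∫ ν = 1`.
In the invariance equation `F_∞(θ)` cancels against the factor `J₀(θc₀/π)` of `ν(θ)`, leaving a
multiple of `J₁((π-θ)c₀/π)`; integrating `1{θ < α+β < π} J₁((π-θ)c₀/π) F(α)` first in `θ` (first
identity) and then in `α` (third identity) gives `J₁((π-β)c₀/π)/2`, and the same multiple of this
is `ν(β)`. Alternating-series bounds give `2 ≤ c₀ < 5/2`, hence `cos c₀ < 0` and `J₀, J₁ ≥ 0` on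
`[0, c₀]`, which is the sign of `ν`.
-/

open Finset Nat

/-! ### Central binomial convolutions -/

theorem sum_antidiagonal_mul_centralBinom (n : ℕ) :
    ∑ p ∈ antidiagonal n, centralBinom p.1 * centralBinom p.2 = 4 ^ n := by
  induction n with
  | zero => simp
  | succ n ih =>
    -- swapping `i ↔ j` shows `2 ∑ i X = ∑ (i + j) X`
    have hsymm (m : ℕ) : 2 * ∑ p ∈ antidiagonal m, p.1 * (centralBinom p.1 * centralBinom p.2) =
        m * ∑ p ∈ antidiagonal m, centralBinom p.1 * centralBinom p.2 := by
      have h := Finset.Nat.sum_antidiagonal_swap (n := m)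
        (f := fun p => p.1 * (centralBinom p.1 * centralBinom p.2))
      simp only [Prod.fst_swap, Prod.snd_swap] at h
      rw [two_mul]; nth_rewrite 1 [← h]
      rw [← sum_add_distrib, mul_sum]
      refine sum_congr rfl fun p hp => ?_
      rw [← mem_antidiagonal.mp hp]; ring
    have step : ∑ p ∈ antidiagonal (n + 1), p.1 * (centralBinom p.1 * centralBinom p.2) =
        2 * ∑ p ∈ antidiagonal n, (2 * p.1 + 1) * (centralBinom p.1 * centralBinom p.2) := by
      rw [Finset.Nat.sum_antidiagonal_succ, mul_sum]
      simp only [zero_mul, zero_add]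
      refine sum_congr rfl fun p _ => ?_
      rw [← mul_assoc, succ_mul_centralBinom_succ]; ring
    have split : ∑ p ∈ antidiagonal n, (2 * p.1 + 1) * (centralBinom p.1 * centralBinom p.2) =
        2 * ∑ p ∈ antidiagonal n, p.1 * (centralBinom p.1 * centralBinom p.2) +
          ∑ p ∈ antidiagonal n, centralBinom p.1 * centralBinom p.2 := by
      simp only [add_mul, one_mul, sum_add_distrib, mul_sum, mul_assoc]
    apply Nat.eq_of_mul_eq_mul_left (show 0 < n + 1 by omega)
    rw [← hsymm, step, split, hsymm, ih]
    ring

theorem two_mul_sum_antidiagonal_catalan_mul_centralBinom (n : ℕ) :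
    2 * ∑ p ∈ antidiagonal n, catalan p.1 * centralBinom p.2 = centralBinom (n + 1) := by
  induction n with
  | zero => simp [centralBinom, Nat.choose]
  | succ n ih =>
    -- `(i + 1) Catᵢ = C(2i, i)` brings in `∑ C(2i,i) C(2j,j) = 4ᵐ`
    have weighted (m : ℕ) : (m + 1) * ∑ p ∈ antidiagonal m, catalan p.1 * centralBinom p.2 =
        4 ^ m + ∑ p ∈ antidiagonal m, p.2 * (catalan p.1 * centralBinom p.2) := by
      rw [← sum_antidiagonal_mul_centralBinom, mul_sum, ← sum_add_distrib]
      refine sum_congr rfl fun p hp => ?_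
      rw [← succ_mul_catalan_eq_centralBinom p.1]
      nth_rewrite 1 [← mem_antidiagonal.mp hp]
      ring
    have step : ∑ p ∈ antidiagonal (n + 1), p.2 * (catalan p.1 * centralBinom p.2) =
        4 * ∑ p ∈ antidiagonal n, p.2 * (catalan p.1 * centralBinom p.2) +
          2 * ∑ p ∈ antidiagonal n, catalan p.1 * centralBinom p.2 := by
      rw [Finset.Nat.sum_antidiagonal_succ', mul_sum, mul_sum, ← sum_add_distrib]
      simp only [zero_mul, zero_add]
      refine sum_congr rfl fun p _ => ?_
      have := succ_mul_centralBinom_succ p.2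
      rw [← mul_assoc, mul_comm _ (catalan _), mul_assoc, this]; ring
    have h1 := weighted (n + 1)
    have h2 := weighted n
    have h3 := succ_mul_centralBinom_succ (n + 1)
    rw [step] at h1
    apply Nat.eq_of_mul_eq_mul_left (show 0 < n + 2 by omega)
    rw [h3, ← ih]
    ring_nf at h1 h2 ⊢
    linarith

theorem centralBinom_succ_eq_mul_catalan (n : ℕ) :
    centralBinom (n + 1) = 2 * (2 * n + 1) * catalan n := by
  apply Nat.eq_of_mul_eq_mul_left (show 0 < n + 1 by omega)
  rw [succ_mul_centralBinom_succ, ← succ_mul_catalan_eq_centralBinom]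
  ring

/-! ### Convolution of power series -/

theorem HasDerivAt.pow_succ_div_factorial {c : ℝ → ℝ} {c' t : ℝ} (hc : HasDerivAt c c' t)
    (n : ℕ) : HasDerivAt (fun t => c t ^ (n + 1) / (n + 1)!) (c t ^ n / n ! * c') t := by
  refine ((hc.pow (n + 1)).div_const _).congr_deriv ?_
  rw [Nat.factorial_succ, Nat.add_sub_cancel]
  push_cast
  field_simp

theorem integral_pow_div_factorial_mul_sub_pow_div_factorial (m l : ℕ) (x : ℝ) :
    ∫ t in (0 : ℝ)..x, t ^ m / m ! * ((x - t) ^ l / l !) = x ^ (m + l + 1) / (m + l + 1)! := by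
  induction l generalizing m with
  | zero =>
    simp only [pow_zero, Nat.factorial_zero, Nat.cast_one, div_one, mul_one, add_zero]
    rw [intervalIntegral.integral_div, integral_pow, zero_pow (Nat.succ_ne_zero m), sub_zero, div_div, Nat.factorial_succ]
    push_cast
    ring
  | succ l ih =>
    -- integration by parts: the boundary term `t^(m+1)/(m+1)! * (x-t)^(l+1)/(l+1)!` vanishes
    have hderiv (t : ℝ) : HasDerivAt
        (fun t => t ^ (m + 1) / (m + 1)! * ((x - t) ^ (l + 1) / (l + 1)!))
        (t ^ m / m ! * ((x - t) ^ (l + 1) / (l + 1)!) -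
          t ^ (m + 1) / (m + 1)! * ((x - t) ^ l / l !)) t := by
      exact (((hasDerivAt_id t).pow_succ_div_factorial m).mul
        (((hasDerivAt_id t).const_sub x).pow_succ_div_factorial l)).congr_deriv
          (by simp only [id_eq, mul_one, mul_neg]; ring)
    have hparts := intervalIntegral.integral_eq_sub_of_hasDerivAt (fun t _ => hderiv t)
      ((by fun_prop : Continuous fun t : ℝ => t ^ m / m ! * ((x - t) ^ (l + 1) / (l + 1)!) -
          t ^ (m + 1) / (m + 1)! * ((x - t) ^ l / l !)).intervalIntegrable 0 x)
    rw [intervalIntegral.integral_sub (by apply Continuous.intervalIntegrable; fun_prop)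
      (by apply Continuous.intervalIntegrable; fun_prop), ih] at hparts
    simp only [sub_self, ne_eq, Nat.add_one_ne_zero, not_false_eq_true, zero_pow, zero_div,
      mul_zero, zero_mul, sub_zero, sub_eq_zero] at hparts
    rw [hparts, show m + 1 + l + 1 = m + (l + 1) + 1 by ring]

theorem hasSum_integral_mul_sub_of_hasSum {u v : ℕ → ℝ → ℝ} {f g : ℝ → ℝ} {U V : ℕ → ℝ} {x : ℝ}
    (hu : ∀ i, Continuous (u i)) (hv : ∀ j, Continuous (v j))
    (hU : Summable U) (hV : Summable V)
    (huU : ∀ i, ∀ t ∈ Set.uIcc 0 x, |u i t| ≤ U i) (hvV : ∀ j, ∀ t ∈ Set.uIcc 0 x, |v j t| ≤ V j)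
    (hf : ∀ t ∈ Set.uIcc 0 x, HasSum (fun i => u i t) (f t))
    (hg : ∀ t ∈ Set.uIcc 0 x, HasSum (fun j => v j t) (g t)) :
    HasSum (fun n => ∑ p ∈ antidiagonal n, ∫ t in (0 : ℝ)..x, u p.1 t * v p.2 (x - t))
      (∫ t in (0 : ℝ)..x, f t * g (x - t)) := by
  have hreflect : ∀ t ∈ Set.uIcc 0 x, x - t ∈ Set.uIcc 0 x := by
    intro t ht
    rwa [← Set.mem_preimage (f := fun s => x - s), Set.preimage_const_sub_uIcc, sub_zero, sub_self,
      Set.uIcc_comm]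
  have hU0 (i : ℕ) : 0 ≤ U i := (abs_nonneg _).trans (huU i 0 Set.left_mem_uIcc)
  have hV0 (j : ℕ) : 0 ≤ V j := (abs_nonneg _).trans (hvV j 0 Set.left_mem_uIcc)
  have hcauchy : ∀ t ∈ Set.uIcc 0 x, HasSum
      (fun n => ∑ p ∈ antidiagonal n, u p.1 t * v p.2 (x - t)) (f t * g (x - t)) := by
    intro t ht
    have hsu : Summable fun i => ‖u i t‖ := hU.of_nonneg_of_le (fun _ => norm_nonneg _)
      fun i => huU i t ht
    have hsv : Summable fun j => ‖v j (x - t)‖ := hV.of_nonneg_of_le (fun _ => norm_nonneg _)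
      fun j => hvV j _ (hreflect t ht)
    rw [← (hf t ht).tsum_eq, ← (hg _ (hreflect t ht)).tsum_eq,
      tsum_mul_tsum_eq_tsum_sum_antidiagonal_of_summable_norm hsu hsv]
    exact (summable_norm_sum_mul_antidiagonal_of_summable_norm hsu hsv).of_norm.hasSum
  have hcont (p : ℕ × ℕ) : Continuous fun t => u p.1 t * v p.2 (x - t) :=
    (hu p.1).mul ((hv p.2).comp (continuous_const.sub continuous_id))
  have hsum := intervalIntegral.hasSum_integral_of_dominated_convergence (μ := volume)
    (F := fun n t => ∑ p ∈ antidiagonal n, u p.1 t * v p.2 (x - t))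
    (fun n _ => ∑ p ∈ antidiagonal n, U p.1 * V p.2)
    (fun n => (continuous_finsetSum _ fun p _ => hcont p).aestronglyMeasurable)
    (fun n => Filter.Eventually.of_forall fun t ht => by
      refine (norm_sum_le _ _).trans (sum_le_sum fun p _ => ?_)
      rw [norm_mul]
      exact mul_le_mul (huU _ t (Set.uIoc_subset_uIcc ht))
        (hvV _ _ (hreflect t (Set.uIoc_subset_uIcc ht))) (norm_nonneg _) (hU0 _))
    (Filter.Eventually.of_forall fun _ _ => summable_sum_mul_antidiagonal_of_summable_mul
      (hU.mul_of_nonneg hV hU0 hV0))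
    intervalIntegrable_const
    (Filter.Eventually.of_forall fun t ht => hcauchy t (Set.uIoc_subset_uIcc ht))
  refine hsum.congr_fun fun n => ?_
  exact (intervalIntegral.integral_finsetSum fun p _ =>
    (hcont p).intervalIntegrable (μ := volume) 0 x).symm

noncomputable def evenEgf (a : ℕ → ℝ) (p : ℕ) (t : ℝ) : ℝ :=
  ∑' k, a k * (t ^ (2 * k + p) / (2 * k + p)!)

section evenEgf

variable {a b : ℕ → ℝ} {M N : ℝ}

theorem summable_pow_two_mul_add_div_factorial (p : ℕ) (r : ℝ) :
    Summable fun k : ℕ => r ^ (2 * k + p) / (2 * k + p)! :=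
  (Real.summable_pow_div_factorial r).comp_injective fun i j h => by simpa using h

theorem abs_mul_pow_div_factorial_le (ha : ∀ k, |a k| ≤ M) (k n : ℕ) {t r : ℝ} (ht : |t| ≤ r) :
    |a k * (t ^ n / n !)| ≤ M * (r ^ n / n !) := by
  rw [abs_mul, abs_div, abs_pow, Nat.abs_cast]
  exact mul_le_mul (ha k) (by gcongr) (by positivity) ((abs_nonneg _).trans (ha k))

theorem hasSum_evenEgf (ha : ∀ k, |a k| ≤ M) (p : ℕ) (t : ℝ) :
    HasSum (fun k => a k * (t ^ (2 * k + p) / (2 * k + p)!)) (evenEgf a p t) :=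
  (((summable_pow_two_mul_add_div_factorial p |t|).mul_left M).of_norm_bounded
    fun k => abs_mul_pow_div_factorial_le ha k _ le_rfl).hasSum

theorem continuous_evenEgf (ha : ∀ k, |a k| ≤ M) (p : ℕ) : Continuous (evenEgf a p) := by
  refine continuous_iff_continuousAt.mpr fun x => ?_
  have hon : ContinuousOn (evenEgf a p) (Set.Icc (-(|x| + 1)) (|x| + 1)) :=
    continuousOn_tsum (fun k => by fun_prop)
      ((summable_pow_two_mul_add_div_factorial p (|x| + 1)).mul_left M)
      fun k t ht => abs_mul_pow_div_factorial_le ha k _ (abs_le.mpr ht)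
  exact hon.continuousAt (Icc_mem_nhds (by linarith [neg_abs_le x]) (by linarith [le_abs_self x]))

theorem evenEgf_zero_apply_zero : evenEgf a 0 0 = a 0 := by
  rw [evenEgf, tsum_eq_single 0 fun k hk => by simp [hk]]
  simp

theorem hasSum_integral_evenEgf_mul_evenEgf (ha : ∀ k, |a k| ≤ M) (hb : ∀ k, |b k| ≤ N)
    (p q : ℕ) (x : ℝ) :
    HasSum (fun n => (∑ i ∈ antidiagonal n, a i.1 * b i.2) *
        (x ^ (2 * n + p + q + 1) / (2 * n + p + q + 1)!))
      (∫ t in (0 : ℝ)..x, evenEgf a p t * evenEgf b q (x - t)) := by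
  have hbound {c : ℕ → ℝ} {K : ℝ} (hc : ∀ k, |c k| ≤ K) (r : ℕ) (k : ℕ) :
      ∀ t ∈ Set.uIcc 0 x, |c k * (t ^ (2 * k + r) / (2 * k + r)!)| ≤
        K * (|x| ^ (2 * k + r) / (2 * k + r)!) := fun t ht =>
    abs_mul_pow_div_factorial_le hc k _ (by simpa using Set.abs_sub_left_of_mem_uIcc ht)
  refine (hasSum_integral_mul_sub_of_hasSum (fun _ => by fun_prop) (fun _ => by fun_prop)
    ((summable_pow_two_mul_add_div_factorial p |x|).mul_left M)
    ((summable_pow_two_mul_add_div_factorial q |x|).mul_left N)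
    (hbound ha p) (hbound hb q) (fun t _ => hasSum_evenEgf ha p t)
    (fun t _ => hasSum_evenEgf hb q t)).congr_fun fun n => ?_
  rw [sum_mul]
  refine sum_congr rfl fun i hi => ?_
  have hexp : 2 * i.1 + p + (2 * i.2 + q) + 1 = 2 * n + p + q + 1 := by
    rw [← mem_antidiagonal.mp hi]; ring
  simp_rw [mul_mul_mul_comm (a i.1), intervalIntegral.integral_const_mul,
    integral_pow_div_factorial_mul_sub_pow_div_factorial, hexp]

theorem hasSum_evenEgf_succ (ha : ∀ k, |a k| ≤ M) (x : ℝ) :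
    HasSum (fun n => a (n + 1) * (x ^ (2 * n + 2) / (2 * n + 2)!)) (evenEgf a 0 x - a 0) := by
  simpa [mul_add, add_assoc] using (hasSum_nat_add_iff' 1).mpr (hasSum_evenEgf ha 0 x)

theorem integral_evenEgf (ha : ∀ k, |a k| ≤ M) (p : ℕ) (x : ℝ) :
    ∫ t in (0 : ℝ)..x, evenEgf a p t = evenEgf a (p + 1) x := by
  have hδ : ∀ k, |(Pi.single 0 1 : ℕ → ℝ) k| ≤ 1 := fun k => by
    rcases eq_or_ne k 0 with rfl | hk <;> simp [*]
  have hone (t : ℝ) : evenEgf (Pi.single 0 1) 0 t = 1 := by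
    rw [evenEgf, tsum_eq_single 0 fun k hk => by simp [hk]]
    simp
  have h := hasSum_integral_evenEgf_mul_evenEgf hδ ha 0 p x
  simp only [hone, one_mul, intervalIntegral.integral_comp_sub_left (evenEgf a p), sub_self,
    sub_zero] at h
  refine h.unique ?_
  refine (hasSum_evenEgf ha (p + 1) x).congr_fun fun n => ?_
  rw [sum_eq_single (0, n) (fun i hi hne => ?_) (by simp)]
  · simp [add_assoc]
  · obtain ⟨i, j⟩ := i
    have hi0 : i ≠ 0 := by rintro rfl; simp_all
    simp [hi0]

end evenEgf

/-! ### Bessel series -/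

theorem abs_neg_one_pow_mul_div_le_one (k : ℕ) {m d : ℝ} (hm : 0 ≤ m) (hmd : m ≤ d) :
    |(-1) ^ k * m / d| ≤ 1 := by
  rw [abs_div, abs_mul, abs_pow, abs_neg, abs_one, one_pow, one_mul, abs_of_nonneg hm,
    abs_of_nonneg (hm.trans hmd)]
  exact div_le_one_of_le₀ hmd (hm.trans hmd)

noncomputable def J0Coeff (k : ℕ) : ℝ := (-1) ^ k * centralBinom k / 4 ^ k

noncomputable def J1Coeff (k : ℕ) : ℝ := (-1) ^ k * centralBinom (k + 1) / 4 ^ (k + 1)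

noncomputable def jincCoeff (k : ℕ) : ℝ := (-1) ^ k * catalan k / 4 ^ k

/-- `jinc x = 2 J₁(x) / x`, extended continuously by `jinc 0 = 1`. -/
noncomputable def jinc : ℝ → ℝ := evenEgf jincCoeff 0

theorem abs_J0Coeff_le (k : ℕ) : |J0Coeff k| ≤ 1 :=
  abs_neg_one_pow_mul_div_le_one k (by positivity) (mod_cast centralBinom_le_four_pow k)

theorem abs_J1Coeff_le (k : ℕ) : |J1Coeff k| ≤ 1 :=
  abs_neg_one_pow_mul_div_le_one k (by positivity) (mod_cast centralBinom_le_four_pow (k + 1))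

theorem abs_jincCoeff_le (k : ℕ) : |jincCoeff k| ≤ 1 := by
  refine abs_neg_one_pow_mul_div_le_one k (by positivity) ?_
  have : catalan k ≤ centralBinom k := by
    rw [← succ_mul_catalan_eq_centralBinom]; exact Nat.le_mul_of_pos_left _ k.succ_pos
  exact_mod_cast this.trans (centralBinom_le_four_pow k)

theorem centralBinom_mul_factorial_mul_factorial (k : ℕ) :
    (centralBinom k : ℝ) * k ! * k ! = (2 * k)! := by
  have h := Nat.choose_mul_factorial_mul_factorial (show k ≤ 2 * k by omega)
  rw [show 2 * k - k = k by omega] at h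
  rw [centralBinom_eq_two_mul_choose]
  exact_mod_cast h

theorem J0_term_eq (k : ℕ) (x : ℝ) :
    (-1) ^ k * (((x / 2) ^ 2) ^ k / (k ! : ℝ) ^ 2) =
      J0Coeff k * (x ^ (2 * k + 0) / (2 * k + 0)!) := by
  have h := centralBinom_mul_factorial_mul_factorial k
  have hc : (centralBinom k : ℝ) ≠ 0 := Nat.cast_ne_zero.mpr (centralBinom_ne_zero k)
  rw [J0Coeff, add_zero, ← h, div_pow, div_pow, ← pow_mul, ← pow_mul, pow_mul 2 2 k]
  field_simp
  norm_num

theorem J0_eq_evenEgf : J0 = evenEgf J0Coeff 0 :=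
  funext fun x => tsum_congr fun k => by rw [← J0_term_eq, ← pow_mul, mul_div_assoc]

theorem hasSum_J0 (x : ℝ) :
    HasSum (fun k => (-1) ^ k * (((x / 2) ^ 2) ^ k / (k ! : ℝ) ^ 2)) (J0 x) := by
  rw [J0_eq_evenEgf]
  exact (hasSum_evenEgf abs_J0Coeff_le 0 x).congr_fun fun k => J0_term_eq k x

theorem J1_term_eq (k : ℕ) (x : ℝ) :
    (-1) ^ k * ((x / 2) ^ (2 * k + 1) / ((k ! : ℝ) * (k + 1)!)) =
      J1Coeff k * (x ^ (2 * k + 1) / (2 * k + 1)!) := by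
  have h : (centralBinom (k + 1) : ℝ) * ((k + 1) * k ! * k !) = 2 * (2 * k + 1)! := by
    have h := centralBinom_mul_factorial_mul_factorial (k + 1)
    rw [show 2 * (k + 1) = 2 * k + 1 + 1 by ring, Nat.factorial_succ (2 * k + 1),
      Nat.factorial_succ k] at h
    push_cast at h
    apply mul_left_cancel₀ (show (k : ℝ) + 1 ≠ 0 by positivity)
    linear_combination h
  have hc : (centralBinom (k + 1) : ℝ) ≠ 0 := Nat.cast_ne_zero.mpr (centralBinom_ne_zero _)
  rw [J1Coeff, div_pow, pow_succ 2, pow_mul 2 2 k, pow_succ 4, Nat.factorial_succ k]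
  push_cast
  field_simp
  linear_combination (-2 * x ^ (2 * k + 1) * 4 ^ k) * h

theorem J1_eq_evenEgf : J1 = evenEgf J1Coeff 1 :=
  funext fun x => tsum_congr fun k => by rw [← J1_term_eq, mul_div_assoc]

theorem hasSum_J1 (x : ℝ) :
    HasSum (fun k => (-1) ^ k * ((x / 2) ^ (2 * k + 1) / ((k ! : ℝ) * (k + 1)!))) (J1 x) := by
  rw [J1_eq_evenEgf]
  exact (hasSum_evenEgf abs_J1Coeff_le 1 x).congr_fun fun k => J1_term_eq k x

theorem J1_eq_mul_jinc (x : ℝ) : J1 x = x / 2 * jinc x := by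
  rw [J1_eq_evenEgf, jinc, evenEgf, evenEgf, ← tsum_mul_left]
  refine tsum_congr fun k => ?_
  rw [J1Coeff, jincCoeff, centralBinom_succ_eq_mul_catalan, Nat.factorial_succ (2 * k), add_zero]
  push_cast
  field_simp
  ring

theorem J0Coeff_zero : J0Coeff 0 = 1 := by
  simp [J0Coeff]

theorem J1Coeff_eq_neg_J0Coeff_succ (k : ℕ) : J1Coeff k = -J0Coeff (k + 1) := by
  rw [J1Coeff, J0Coeff, pow_succ (-1 : ℝ)]; ring

theorem J0_zero : J0 0 = 1 := by
  rw [J0_eq_evenEgf, evenEgf_zero_apply_zero, J0Coeff_zero]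

theorem jinc_zero : jinc 0 = 1 := by
  rw [jinc, evenEgf_zero_apply_zero, jincCoeff]; simp

theorem J1_zero : J1 0 = 0 := by
  rw [J1_eq_mul_jinc]; ring

theorem continuous_J0 : Continuous J0 :=
  J0_eq_evenEgf ▸ continuous_evenEgf abs_J0Coeff_le 0

theorem continuous_J1 : Continuous J1 :=
  J1_eq_evenEgf ▸ continuous_evenEgf abs_J1Coeff_le 1

theorem continuous_jinc : Continuous jinc :=
  continuous_evenEgf abs_jincCoeff_le 0

theorem integral_J1 (a b : ℝ) : ∫ t in a..b, J1 t = J0 a - J0 b := by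
  have h (x : ℝ) : ∫ t in (0 : ℝ)..x, J1 t = 1 - J0 x := by
    rw [J1_eq_evenEgf, integral_evenEgf abs_J1Coeff_le, J0_eq_evenEgf]
    have h := (hasSum_evenEgf_succ abs_J0Coeff_le x).neg
    rw [neg_sub, J0Coeff_zero] at h
    refine (hasSum_evenEgf abs_J1Coeff_le (1 + 1) x).unique (h.congr_fun fun n => ?_)
    rw [J1Coeff_eq_neg_J0Coeff_succ]
    ring
  rw [← intervalIntegral.integral_interval_sub_left (continuous_J1.intervalIntegrable 0 b)
    (continuous_J1.intervalIntegrable 0 a), h, h]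
  ring

theorem cos_eq_evenEgf (x : ℝ) : cos x = evenEgf (fun k => (-1) ^ k) 0 x :=
  (Real.hasSum_cos x).unique <|
    (hasSum_evenEgf (M := 1) (fun k => by simp) 0 x).congr_fun fun k => by
      rw [add_zero, mul_div_assoc]

theorem sum_antidiagonal_J0Coeff_mul_J1Coeff (n : ℕ) :
    ∑ i ∈ antidiagonal n, J0Coeff i.1 * J1Coeff i.2 = (-1) ^ n + J0Coeff (n + 1) := by
  have hterm : ∀ i ∈ antidiagonal n, J0Coeff i.1 * J1Coeff i.2 =
      (-1) ^ n / 4 ^ (n + 1) * ((centralBinom i.1 : ℝ) * centralBinom (i.2 + 1)) := by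
    intro i hi
    rw [← mem_antidiagonal.mp hi, J0Coeff, J1Coeff]
    ring
  -- the terms with `j ≥ 1` of `∑_{i+j=n+1} C(2i,i) C(2j,j) = 4^(n+1)`
  have hsum : ∑ i ∈ antidiagonal n, (centralBinom i.1 : ℝ) * centralBinom (i.2 + 1) =
      4 ^ (n + 1) - centralBinom (n + 1) := by
    have h := sum_antidiagonal_mul_centralBinom (n + 1)
    rw [Finset.Nat.sum_antidiagonal_succ', centralBinom_zero, mul_one] at h
    rw [eq_sub_iff_add_eq']
    exact_mod_cast h
  rw [sum_congr rfl hterm, ← mul_sum, hsum, J0Coeff]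
  field_simp
  ring

theorem sum_antidiagonal_jincCoeff_mul_J0Coeff (n : ℕ) :
    ∑ i ∈ antidiagonal n, jincCoeff i.1 * J0Coeff i.2 = 2 * J1Coeff n := by
  have hterm : ∀ i ∈ antidiagonal n, jincCoeff i.1 * J0Coeff i.2 =
      (-1) ^ n / 4 ^ n * ((catalan i.1 : ℝ) * centralBinom i.2) := by
    intro i hi
    rw [← mem_antidiagonal.mp hi, jincCoeff, J0Coeff]
    ring
  have hsum : 2 * ∑ i ∈ antidiagonal n, (catalan i.1 : ℝ) * centralBinom i.2 =
      centralBinom (n + 1) := by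
    exact_mod_cast two_mul_sum_antidiagonal_catalan_mul_centralBinom n
  rw [sum_congr rfl hterm, ← mul_sum, J1Coeff, ← hsum]
  field_simp
  ring

theorem integral_J0_mul_J1_sub (x : ℝ) : ∫ t in (0 : ℝ)..x, J0 t * J1 (x - t) = J0 x - cos x := by
  have h := hasSum_integral_evenEgf_mul_evenEgf abs_J0Coeff_le abs_J1Coeff_le 0 1 x
  rw [← J0_eq_evenEgf, ← J1_eq_evenEgf] at h
  refine h.unique ?_
  have hcos := hasSum_evenEgf_succ (a := fun k => (-1 : ℝ) ^ k) (M := 1) (fun k => by simp) x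
  rw [← cos_eq_evenEgf] at hcos
  have hval : J0 x - cos x = (evenEgf J0Coeff 0 x - J0Coeff 0) - (cos x - 1) := by
    rw [J0Coeff_zero, J0_eq_evenEgf]; ring
  rw [hval]
  refine ((hasSum_evenEgf_succ abs_J0Coeff_le x).sub hcos).congr_fun fun n => ?_
  rw [sum_antidiagonal_J0Coeff_mul_J1Coeff]
  ring

theorem integral_jinc_mul_J0_sub (x : ℝ) :
    ∫ t in (0 : ℝ)..x, jinc t * J0 (x - t) = 2 * J1 x := by
  have h := hasSum_integral_evenEgf_mul_evenEgf abs_jincCoeff_le abs_J0Coeff_le 0 0 x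
  rw [← J0_eq_evenEgf] at h
  refine h.unique ?_
  rw [J1_eq_evenEgf]
  refine ((hasSum_evenEgf abs_J1Coeff_le 1 x).mul_left 2).congr_fun fun n => ?_
  rw [sum_antidiagonal_jincCoeff_mul_J0Coeff]
  ring

/-! ### Signs and the first zero of `J₀` -/

theorem one_sub_sq_div_four_le_J0 {x : ℝ} (hx : x ^ 2 ≤ 4) : 1 - x ^ 2 / 4 ≤ J0 x := by
  have hanti : Antitone fun k => ((x / 2) ^ 2) ^ k / (k ! : ℝ) ^ 2 := by
    refine antitone_nat_of_succ_le fun k => ?_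
    have hratio : (x / 2) ^ 2 / ((k : ℝ) + 1) ^ 2 ≤ 1 :=
      div_le_one_of_le₀ (by nlinarith [(k.cast_nonneg : (0 : ℝ) ≤ k)]) (by positivity)
    calc ((x / 2) ^ 2) ^ (k + 1) / ((k + 1)! : ℝ) ^ 2
        = ((x / 2) ^ 2) ^ k / (k ! : ℝ) ^ 2 * ((x / 2) ^ 2 / ((k : ℝ) + 1) ^ 2) := by
          rw [Nat.factorial_succ]; push_cast; field_simp; ring
      _ ≤ ((x / 2) ^ 2) ^ k / (k ! : ℝ) ^ 2 := mul_le_of_le_one_right (by positivity) hratio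
  have h := hanti.alternating_series_le_tendsto (hasSum_J0 x).tendsto_sum_nat 1
  norm_num [Finset.sum_range_succ] at h
  linarith

theorem J0_pos_of_sq_lt_four {x : ℝ} (hx : x ^ 2 < 4) : 0 < J0 x := by
  linarith [one_sub_sq_div_four_le_J0 hx.le]

theorem J0_five_halves_neg : J0 (5 / 2) < 0 := by
  set y : ℝ := (5 / 2 / 2) ^ 2 with hy
  -- the terms of the series only decrease from `k = 1` on, so split off `k = 0`
  have hanti : Antitone fun k => y ^ (k + 1) / ((k + 1)! : ℝ) ^ 2 := by
    refine antitone_nat_of_succ_le fun k => ?_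
    have hratio : y / ((k : ℝ) + 2) ^ 2 ≤ 1 :=
      div_le_one_of_le₀ (by rw [hy]; nlinarith [(k.cast_nonneg : (0 : ℝ) ≤ k)]) (by positivity)
    calc y ^ (k + 1 + 1) / ((k + 1 + 1)! : ℝ) ^ 2
        = y ^ (k + 1) / ((k + 1)! : ℝ) ^ 2 * (y / ((k : ℝ) + 2) ^ 2) := by
          rw [Nat.factorial_succ (k + 1)]; push_cast; field_simp; ring
      _ ≤ y ^ (k + 1) / ((k + 1)! : ℝ) ^ 2 := mul_le_of_le_one_right (by positivity) hratio
  have htail := ((hasSum_nat_add_iff' 1).mpr (hasSum_J0 (5 / 2))).neg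
  simp only [pow_succ (-1 : ℝ), mul_neg_one, neg_mul, neg_neg] at htail
  have h := hanti.alternating_series_le_tendsto htail.tendsto_sum_nat 2
  norm_num [Finset.sum_range_succ, Nat.factorial, hy] at h
  linarith

theorem J1_nonneg {x : ℝ} (hx0 : 0 ≤ x) (hx : x ^ 2 ≤ 8) : 0 ≤ J1 x := by
  have hanti : Antitone fun k => (x / 2) ^ (2 * k + 1) / ((k ! : ℝ) * (k + 1)!) := by
    refine antitone_nat_of_succ_le fun k => ?_
    have hratio : (x / 2) ^ 2 / (((k : ℝ) + 1) * (k + 2)) ≤ 1 :=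
      div_le_one_of_le₀ (by nlinarith [(k.cast_nonneg : (0 : ℝ) ≤ k)]) (by positivity)
    calc (x / 2) ^ (2 * (k + 1) + 1) / (((k + 1)! : ℝ) * (k + 1 + 1)!)
        = (x / 2) ^ (2 * k + 1) / ((k ! : ℝ) * (k + 1)!) *
          ((x / 2) ^ 2 / (((k : ℝ) + 1) * (k + 2))) := by
          rw [Nat.factorial_succ (k + 1), Nat.factorial_succ k]; push_cast; field_simp; ring
      _ ≤ (x / 2) ^ (2 * k + 1) / ((k ! : ℝ) * (k + 1)!) :=
          mul_le_of_le_one_right (by positivity) hratio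
  have h := hanti.alternating_series_le_tendsto (hasSum_J1 x).tendsto_sum_nat 1
  norm_num [Finset.sum_range_succ] at h
  nlinarith

open Set

theorem exists_J0_eq_zero : ∃ z ∈ Ioo (1 : ℝ) (5 / 2), J0 z = 0 :=
  intermediate_value_Ioo' (by norm_num) continuous_J0.continuousOn
    ⟨J0_five_halves_neg, J0_pos_of_sq_lt_four (by norm_num)⟩

theorem bddBelow_zeros_J0 : BddBelow {x : ℝ | 0 < x ∧ J0 x = 0} :=
  ⟨0, fun _ hx => hx.1.le⟩

theorem c0_le_of_J0_eq_zero {z : ℝ} (hz : 0 < z) (hJ : J0 z = 0) : c0 ≤ z :=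
  csInf_le bddBelow_zeros_J0 ⟨hz, hJ⟩

theorem c0_lt_five_halves : c0 < 5 / 2 := by
  obtain ⟨z, hz, hJ⟩ := exists_J0_eq_zero
  exact (c0_le_of_J0_eq_zero (by linarith [hz.1]) hJ).trans_lt hz.2

theorem c0_nonneg_and_J0_c0 : 0 ≤ c0 ∧ J0 c0 = 0 := by
  obtain ⟨z, hz, hJ⟩ := exists_J0_eq_zero
  have hclosed : IsClosed {x : ℝ | 0 ≤ x ∧ J0 x = 0} :=
    (isClosed_le continuous_const continuous_id).inter (isClosed_eq continuous_J0 continuous_const)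
  have hmem : c0 ∈ closure {x : ℝ | 0 < x ∧ J0 x = 0} :=
    csInf_mem_closure ⟨z, by linarith [hz.1], hJ⟩ bddBelow_zeros_J0
  have hsub : {x : ℝ | 0 < x ∧ J0 x = 0} ⊆ {x : ℝ | 0 ≤ x ∧ J0 x = 0} :=
    fun x hx => ⟨hx.1.le, hx.2⟩
  exact closure_minimal hsub hclosed hmem

theorem J0_c0 : J0 c0 = 0 := c0_nonneg_and_J0_c0.2

theorem two_le_c0 : 2 ≤ c0 := by
  by_contra! h
  have := J0_pos_of_sq_lt_four (x := c0) (by nlinarith [c0_nonneg_and_J0_c0.1])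
  linarith [J0_c0]

theorem c0_pos : 0 < c0 := by linarith [two_le_c0]

theorem J0_pos_of_lt_c0 {u : ℝ} (hu0 : 0 ≤ u) (hu : u < c0) : 0 < J0 u := by
  by_contra! hneg
  obtain ⟨z, hz, hJ⟩ := intermediate_value_Icc' hu0 continuous_J0.continuousOn
    ⟨hneg, by rw [J0_zero]; norm_num⟩
  have hz0 : z ≠ 0 := by rintro rfl; simp [J0_zero] at hJ
  linarith [c0_le_of_J0_eq_zero (lt_of_le_of_ne hz.1 hz0.symm) hJ, hz.2]

theorem J0_nonneg_of_le_c0 {u : ℝ} (hu0 : 0 ≤ u) (hu : u ≤ c0) : 0 ≤ J0 u := by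
  rcases hu.lt_or_eq with h | rfl
  · exact (J0_pos_of_lt_c0 hu0 h).le
  · exact J0_c0.ge

theorem J1_nonneg_of_le_c0 {u : ℝ} (hu0 : 0 ≤ u) (hu : u ≤ c0) : 0 ≤ J1 u :=
  J1_nonneg hu0 (by nlinarith [c0_lt_five_halves])

theorem cos_c0_neg : cos c0 < 0 :=
  cos_neg_of_pi_div_two_lt_of_lt (by linarith [pi_lt_d2, two_le_c0])
    (by linarith [pi_gt_three, c0_lt_five_halves])

theorem mul_c0_div_pi_mem_Icc {θ : ℝ} (hθ : θ ∈ Icc 0 π) : θ * c0 / π ∈ Icc 0 c0 := by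
  refine ⟨div_nonneg (mul_nonneg hθ.1 c0_pos.le) pi_pos.le, ?_⟩
  rw [div_le_iff₀ pi_pos]
  nlinarith [hθ.2, c0_pos]

theorem nu_nonneg {θ : ℝ} (hθ : θ ∈ Icc 0 π) : 0 ≤ nu θ := by
  have hJ0 := mul_c0_div_pi_mem_Icc hθ
  have hJ1 := mul_c0_div_pi_mem_Icc (θ := π - θ) ⟨by linarith [hθ.2], by linarith [hθ.1]⟩
  have hK : 0 < -(c0 / (π * cos c0)) :=
    neg_pos.mpr (div_neg_of_pos_of_neg c0_pos (mul_neg_of_pos_of_neg pi_pos cos_c0_neg))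
  rw [nu, mul_assoc]
  exact mul_nonneg hK.le (mul_nonneg (J0_nonneg_of_le_c0 hJ0.1 hJ0.2)
    (J1_nonneg_of_le_c0 hJ1.1 hJ1.2))

/-! ### The angle chain -/

theorem F_eq_jinc (α : ℝ) : F α = (c0 / (2 * π)) ^ 2 * jinc (α * c0 / π) := by
  rw [F]
  split_ifs with hα
  · rw [hα, zero_mul, zero_div, jinc_zero, mul_one]
  · rw [J1_eq_mul_jinc]
    field_simp

theorem continuous_F : Continuous F := by
  rw [funext F_eq_jinc]
  exact continuous_const.mul (continuous_jinc.comp (by fun_prop))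

theorem Finf_pos {θ : ℝ} (h0 : 0 ≤ θ) (hπ : θ < π) : 0 < Finf θ := by
  refine J0_pos_of_lt_c0 (div_nonneg (mul_nonneg h0 c0_pos.le) pi_pos.le) ?_
  rw [div_lt_iff₀ pi_pos]
  nlinarith [c0_pos]

theorem Finf_pi : Finf π = 0 := by
  rw [Finf, mul_div_cancel_left₀ _ pi_ne_zero, J0_c0]

theorem integral_comp_mul_div {f : ℝ → ℝ} {c d : ℝ} (hc : c ≠ 0) (hd : d ≠ 0) (a b : ℝ) :
    ∫ x in a..b, f (x * c / d) = d / c * ∫ u in a * c / d..b * c / d, f u := by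
  simp_rw [mul_div_assoc]
  rw [intervalIntegral.integral_comp_mul_right f (div_ne_zero hc hd), inv_div, smul_eq_mul]

theorem integral_J1_reflect (y : ℝ) :
    ∫ θ in (0 : ℝ)..y, J1 ((π - θ) * c0 / π) = π / c0 * J0 ((π - y) * c0 / π) := by
  have h := intervalIntegral.integral_comp_sub_left (fun u => J1 (u * c0 / π)) (a := 0) (b := y) π
  rw [h, integral_comp_mul_div c0_pos.ne' pi_ne_zero, integral_J1, sub_zero,
    mul_div_cancel_left₀ _ pi_ne_zero, J0_c0, sub_zero]

theorem integral_F_mul_J0 (s : ℝ) :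
    ∫ α in (0 : ℝ)..s, F α * J0 ((s - α) * c0 / π) = c0 / (2 * π) * J1 (s * c0 / π) := by
  have h (α : ℝ) : F α * J0 ((s - α) * c0 / π) =
      (c0 / (2 * π)) ^ 2 * (jinc (α * c0 / π) * J0 (s * c0 / π - α * c0 / π)) := by
    rw [F_eq_jinc, sub_mul, sub_div]; ring
  simp_rw [h]
  rw [intervalIntegral.integral_const_mul,
    integral_comp_mul_div (f := fun u => jinc u * J0 (s * c0 / π - u)) c0_pos.ne' pi_ne_zero,
    zero_mul, zero_div, integral_jinc_mul_J0_sub]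
  field_simp [c0_pos.ne']

theorem integral_nu : ∫ θ in (0 : ℝ)..π, nu θ = 1 := by
  have h (θ : ℝ) : nu θ =
      -(c0 / (π * cos c0)) * (J0 (θ * c0 / π) * J1 (π * c0 / π - θ * c0 / π)) := by
    rw [nu, sub_mul, sub_div]; ring
  simp_rw [h]
  rw [intervalIntegral.integral_const_mul,
    integral_comp_mul_div (f := fun u => J0 u * J1 (π * c0 / π - u)) c0_pos.ne' pi_ne_zero,
    zero_mul, zero_div, integral_J0_mul_J1_sub, mul_div_cancel_left₀ _ pi_ne_zero, J0_c0, zero_sub]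
  field_simp [c0_pos.ne', cos_c0_neg.ne]

theorem integral_ite_lt {f : ℝ → ℝ} {a b c : ℝ} (hc : c ∈ Icc a b) :
    ∫ x in a..b, (if x < c then f x else 0) = ∫ x in a..c, f x := by
  rw [← intervalIntegral.integral_indicator hc]
  refine intervalIntegral.integral_congr_ae ?_
  filter_upwards [volume.ae_ne c] with x hx _
  by_cases h : x < c
  · simp [h, h.le]
  · simp [h, lt_of_le_of_ne (not_lt.mp h) hx.symm]

theorem integral_integral_swap_Ioc {g : ℝ → ℝ → ℝ} {a b : ℝ} (hab : a ≤ b)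
    (hg : IntegrableOn (Function.uncurry g) (Ioc a b ×ˢ Ioc a b)) :
    ∫ x in a..b, ∫ y in a..b, g x y = ∫ y in a..b, ∫ x in a..b, g x y := by
  simp only [intervalIntegral.integral_of_le hab]
  exact integral_integral_swap (by rwa [Measure.prod_restrict, ← Measure.volume_eq_prod])

theorem integrableOn_ite_J1_reflect_mul_F (β : ℝ) :
    IntegrableOn (Function.uncurry fun θ α =>
      if θ < α + β ∧ α + β < π then J1 ((π - θ) * c0 / π) * F α else 0) (Ioc 0 π ×ˢ Ioc 0 π) := by
  have hg : (Function.uncurry fun θ α =>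
      if θ < α + β ∧ α + β < π then J1 ((π - θ) * c0 / π) * F α else 0) =
      {p : ℝ × ℝ | p.1 < p.2 + β ∧ p.2 + β < π}.indicator
        fun p => J1 ((π - p.1) * c0 / π) * F p.2 := by
    ext ⟨θ, α⟩
    simp only [Function.uncurry, indicator, mem_ofPred_eq]
  have hmeas : MeasurableSet {p : ℝ × ℝ | p.1 < p.2 + β ∧ p.2 + β < π} :=
    (measurableSet_lt measurable_fst (measurable_snd.add_const β)).inter
      (measurableSet_lt (measurable_snd.add_const β) measurable_const)
  have hcont : Continuous fun p : ℝ × ℝ => J1 ((π - p.1) * c0 / π) * F p.2 :=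
    (continuous_J1.comp (by fun_prop)).mul (continuous_F.comp continuous_snd)
  rw [hg]
  exact ((hcont.continuousOn.integrableOn_compact (isCompact_Icc.prod isCompact_Icc)).mono_set
    (prod_mono Ioc_subset_Icc_self Ioc_subset_Icc_self)).indicator hmeas

theorem integral_ite_J1_reflect_mul_F {α β : ℝ} (hαβ : 0 ≤ α + β) :
    ∫ θ in (0 : ℝ)..π, (if θ < α + β ∧ α + β < π then J1 ((π - θ) * c0 / π) * F α else 0) =
      if α < π - β then π / c0 * (F α * J0 ((π - β - α) * c0 / π)) else 0 := by
  split_ifs with h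
  · simp only [show α + β < π by linarith, and_true]
    rw [integral_ite_lt ⟨hαβ, by linarith⟩, intervalIntegral.integral_mul_const,
      integral_J1_reflect]
    ring_nf
  · simp only [show ¬ α + β < π by linarith, and_false, if_false, intervalIntegral.integral_zero]

theorem integral_J1_reflect_mul_integral_F {β : ℝ} (hβ : β ∈ Ioo 0 π) :
    ∫ θ in (0 : ℝ)..π, J1 ((π - θ) * c0 / π) *
        ∫ α in (0 : ℝ)..π, (if θ < α + β ∧ α + β < π then F α else 0) =
      J1 ((π - β) * c0 / π) / 2 := by
  simp_rw [← intervalIntegral.integral_const_mul, mul_ite, mul_zero]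
  rw [integral_integral_swap_Ioc pi_pos.le (integrableOn_ite_J1_reflect_mul_F β),
    intervalIntegral.integral_congr fun α hα => integral_ite_J1_reflect_mul_F
      (by linarith [(uIcc_of_le pi_pos.le ▸ hα : α ∈ Icc 0 π).1, hβ.1]),
    integral_ite_lt ⟨by linarith [hβ.2], by linarith [hβ.1]⟩, intervalIntegral.integral_const_mul,
    integral_F_mul_J0]
  field_simp [c0_pos.ne']

theorem nu_mul_transition_factor {θ : ℝ} (β : ℝ) (hθ : θ ∈ Icc 0 π) :
    nu θ * (2 * Finf β / Finf θ) =
      -(2 * c0 / (π * cos c0)) * Finf β * J1 ((π - θ) * c0 / π) := by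
  rcases hθ.2.lt_or_eq with hlt | rfl
  · have hne := (Finf_pos hθ.1 hlt).ne'
    rw [nu, ← Finf]
    field_simp
  · rw [Finf_pi, div_zero, mul_zero, sub_self, zero_mul, zero_div, J1_zero, mul_zero]

/-- Proposition 4.2: `ν` is the invariant probability density of the Markov chain of
angles along the spine. -/
theorem nu_invariant_density :
    (∀ θ ∈ Set.Icc (0 : ℝ) Real.pi, 0 ≤ nu θ) ∧
    (∫ θ in (0:ℝ)..Real.pi, nu θ) = 1 ∧
    (∀ β ∈ Set.Ioo (0 : ℝ) Real.pi,
      (∫ θ in (0:ℝ)..Real.pi, nu θ * (2 * Finf β / Finf θ) *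
        ∫ α in (0:ℝ)..Real.pi,
          if θ < α + β ∧ α + β < Real.pi then F α else 0) = nu β) := by
  refine ⟨fun θ hθ => nu_nonneg hθ, integral_nu, fun β hβ => ?_⟩
  have hpoint : ∀ θ ∈ uIcc 0 π, nu θ * (2 * Finf β / Finf θ) *
      ∫ α in (0 : ℝ)..π, (if θ < α + β ∧ α + β < π then F α else 0) =
      -(2 * c0 / (π * cos c0)) * Finf β * (J1 ((π - θ) * c0 / π) *
        ∫ α in (0 : ℝ)..π, (if θ < α + β ∧ α + β < π then F α else 0)) := by
    intro θ hθ
    rw [nu_mul_transition_factor β (uIcc_of_le pi_pos.le ▸ hθ), mul_assoc]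
  rw [intervalIntegral.integral_congr hpoint, intervalIntegral.integral_const_mul,
    integral_J1_reflect_mul_integral_F hβ, nu, Finf]
  ring
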